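/- arXiv:2303.02022 — 3 statements merged into one kernel-verified Lean document; each statement's English description precedes it below -/
import Mathlib

section
/- Let F be a formal group law over a commutative ring R, and suppose s, m are positive integers with sm ≡ 1 mod N. In the ring E = R[[y]]/([N](y)), the element [m](y) divides y. Consequently, any localization of E in which y is inverted also inverts [m](y). -/
open Finset

noncomputable section

variable {R : Type} [CommRing R]

/-- Substitution of two multivariate power series (with zero constant term) into a
two-variable power series `F`.  The coefficient of a monomial `d` only receives
contributions from pairs `(i, j)` with `i, j ≤ |d|`, so the sum below is finite and agrees
with the usual substitution `F(f, g)` whenever `f` and `g` have zero constant term. -/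
def subst2 {τ : Type} (F : MvPowerSeries (Fin 2) R) (f g : MvPowerSeries τ R) :
    MvPowerSeries τ R :=
  fun d =>
    ∑ ij ∈ range (d.sum fun _ n => n + 1) ×ˢ range (d.sum fun _ n => n + 1),
      MvPowerSeries.coeff (Finsupp.single 0 ij.1 + Finsupp.single 1 ij.2) F *
        MvPowerSeries.coeff d (f ^ ij.1 * g ^ ij.2)

/-- A (one-dimensional, commutative) formal group law over `R`: a two-variable power
series `F` with `F(x,0) = x`, `F(0,y) = y`, `F(x,y) = F(y,x)` and
`F(F(x,y),z) = F(x,F(y,z))`. -/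
structure FormalGroupLaw (R : Type) [CommRing R] where
  F : MvPowerSeries (Fin 2) R
  unit_left : ∀ n : ℕ, MvPowerSeries.coeff (Finsupp.single 0 n) F = if n = 1 then 1 else 0
  unit_right : ∀ n : ℕ, MvPowerSeries.coeff (Finsupp.single 1 n) F = if n = 1 then 1 else 0
  comm : ∀ i j : ℕ,
    MvPowerSeries.coeff (Finsupp.single 0 i + Finsupp.single 1 j) F =
      MvPowerSeries.coeff (Finsupp.single 0 j + Finsupp.single 1 i) F
  assoc : subst2 F (subst2 F (MvPowerSeries.X 0) (MvPowerSeries.X 1)) (MvPowerSeries.X 2) =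
    subst2 F (MvPowerSeries.X (0 : Fin 3)) (subst2 F (MvPowerSeries.X 1) (MvPowerSeries.X 2))

/-- The `m`-series `[m](y)` of a formal group law, defined by `[0](y) = 0` and
`[m](y) = F([m-1](y), y)`. -/
def FormalGroupLaw.mSeries (F : FormalGroupLaw R) : ℕ → PowerSeries R
  | 0 => 0
  | m + 1 => subst2 F.F (F.mSeries m) PowerSeries.X

/-- Substitution `f(g)` of a one-variable power series `g` into a one-variable power series
`f`; correct whenever `g` has zero constant term. -/
def substOne (f g : PowerSeries R) : PowerSeries R :=
  PowerSeries.mk fun n => ∑ i ∈ range (n + 1), PowerSeries.coeff i f * PowerSeries.coeff n (g ^ i)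

/-! Since `F(x, 0) = x`, the series `F(x, y) - x` is divisible by `y`; with associativity this gives
`[a + b] = F([a], [b]) ≡ [a] mod [b]`. Hence `[c] ∣ [ck]`, and `[a] ≡ [b] mod [N]` whenever
`a ≡ b mod N`. So in `E` we get `y = [1] = [sm]`, which is a multiple of `[m]`. -/

namespace MvPowerSeries

variable {σ τ : Type}

theorem le_degree_of_coeff_pow_mul_pow_ne_zero {f g : MvPowerSeries τ R}
    (hf : constantCoeff f = 0) (hg : constantCoeff g = 0) {i j : ℕ} {d : τ →₀ ℕ}
    (h : coeff d (f ^ i * g ^ j) ≠ 0) : i + j ≤ d.degree := by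
  have := (add_le_add (le_order_pow_of_constantCoeff_eq_zero i hf)
    (le_order_pow_of_constantCoeff_eq_zero j hg)).trans ((le_order_mul).trans (order_le h))
  exact_mod_cast this

theorem hasSubst_pair {f g : MvPowerSeries τ R} (hf : constantCoeff f = 0)
    (hg : constantCoeff g = 0) : HasSubst ![f, g] :=
  hasSubst_of_constantCoeff_zero (Fin.forall_fin_two.mpr ⟨hf, hg⟩)

theorem subst_subst_pair {b : σ → MvPowerSeries τ R} (hb : HasSubst b)
    (Φ : MvPowerSeries (Fin 2) R) {A B : MvPowerSeries σ R} (hA : constantCoeff A = 0)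
    (hB : constantCoeff B = 0) :
    subst b (subst ![A, B] Φ) = subst ![subst b A, subst b B] Φ := by
  rw [subst_comp_subst_apply (hasSubst_pair hA hB) hb]
  congr 1
  funext i
  fin_cases i <;> rfl

theorem X_dvd_sub_X_of_coeff_single {Φ : MvPowerSeries (Fin 2) R} {i j : Fin 2}
    (hij : i ≠ j) (h : ∀ n : ℕ, coeff (Finsupp.single i n) Φ = if n = 1 then 1 else 0) :
    X j ∣ Φ - X i := by
  refine X_dvd_iff.mpr fun e he => ?_
  have he : e = Finsupp.single i (e i) := by
    ext k
    by_cases hk : k = i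
    · simp [hk]
    · obtain rfl : k = j := by omega
      simp [he, hij.symm]
  rw [he, map_sub, h, coeff_X]
  simp [(Finsupp.single_injective i).eq_iff]

theorem dvd_subst_of_X_dvd {a : σ → MvPowerSeries τ R} (ha : HasSubst a)
    {Φ : MvPowerSeries σ R} {i : σ} (h : X i ∣ Φ) : a i ∣ subst a Φ := by
  simpa [ha] using map_dvd (substAlgHom (R := R) ha) h

end MvPowerSeries

theorem Finsupp.degree_lt_sum_add_one {τ : Type} {d : τ →₀ ℕ} (hd : d ≠ 0) :
    d.degree < d.sum fun _ n => n + 1 := by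
  rw [Finsupp.sum, Finset.sum_add_distrib, ← Finsupp.degree_apply, Finset.sum_const,
    smul_eq_mul, mul_one, lt_add_iff_pos_right, Finset.card_pos, Finsupp.support_nonempty_iff]
  exact hd

open MvPowerSeries

theorem subst2_eq_subst {τ : Type} {Φ : MvPowerSeries (Fin 2) R} (hΦ : constantCoeff Φ = 0)
    {f g : MvPowerSeries τ R} (hf : constantCoeff f = 0) (hg : constantCoeff g = 0) :
    subst2 Φ f g = subst ![f, g] Φ := by
  ext d
  set B := d.sum fun _ n => n + 1
  set pair : ℕ × ℕ → Fin 2 →₀ ℕ := fun ij => Finsupp.single 0 ij.1 + Finsupp.single 1 ij.2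
  have pair_injective : Function.Injective pair := fun p q h => by
    simpa [pair, Prod.ext_iff] using And.intro (DFunLike.congr_fun h 0) (DFunLike.congr_fun h 1)
  rw [coeff_subst (hasSubst_pair hf hg),
    finsum_eq_sum_of_support_subset _ (s := (range B ×ˢ range B).image pair),
    Finset.sum_image pair_injective.injOn]
  · simp only [pair, Finsupp.prod_pow, Fin.prod_univ_two, Finsupp.coe_add, Pi.add_apply,
      Matrix.cons_val_zero, Matrix.cons_val_one, Matrix.cons_val_fin_one, Finsupp.single_eq_same,
      Finsupp.single_eq_of_ne zero_ne_one, Finsupp.single_eq_of_ne one_ne_zero, add_zero,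
      zero_add, smul_eq_mul]
    rfl
  -- A monomial `e` of `Φ` contributes to `coeff d` only if `e 0 + e 1 ≤ deg d < B`.
  intro e he
  replace he : coeff e Φ * coeff d (f ^ e 0 * g ^ e 1) ≠ 0 := by
    simpa [Finsupp.prod_fintype] using he
  have hΦe := left_ne_zero_of_mul he
  have hdeg := le_degree_of_coeff_pow_mul_pow_ne_zero hf hg (right_ne_zero_of_mul he)
  have he0 : e 0 + e 1 ≠ 0 := fun h => hΦe <| by
    rw [show e = 0 by ext i; fin_cases i <;> simp <;> omega]
    simpa using hΦ
  have hB : d.degree < B := Finsupp.degree_lt_sum_add_one fun hd => by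
    simp [hd] at hdeg; omega
  refine Finset.mem_image.mpr ⟨(e 0, e 1), ?_, ?_⟩
  · simp only [Finset.mem_product, Finset.mem_range]; omega
  · ext i; fin_cases i <;> simp [pair]

namespace FormalGroupLaw

variable (F : FormalGroupLaw R) {τ : Type}

theorem constantCoeff_F : constantCoeff F.F = 0 := by
  simpa using F.unit_left 0

theorem dvd_subst_sub_left {f g : MvPowerSeries τ R} (hf : constantCoeff f = 0)
    (hg : constantCoeff g = 0) : g ∣ subst ![f, g] F.F - f := by
  have := dvd_subst_of_X_dvd (hasSubst_pair hf hg)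
    (X_dvd_sub_X_of_coeff_single (j := 1) zero_ne_one F.unit_left)
  simpa [subst_sub (hasSubst_pair hf hg), subst_X (hasSubst_pair hf hg)] using this

theorem dvd_subst_sub_right {f g : MvPowerSeries τ R} (hf : constantCoeff f = 0)
    (hg : constantCoeff g = 0) : f ∣ subst ![f, g] F.F - g := by
  have := dvd_subst_of_X_dvd (hasSubst_pair hf hg)
    (X_dvd_sub_X_of_coeff_single (j := 0) one_ne_zero F.unit_right)
  simpa [subst_sub (hasSubst_pair hf hg), subst_X (hasSubst_pair hf hg)] using this

theorem subst_pair_zero_right {f : MvPowerSeries τ R} (hf : constantCoeff f = 0) :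
    subst ![f, 0] F.F = f := by
  simpa [sub_eq_zero] using F.dvd_subst_sub_left hf (map_zero _)

theorem subst_pair_zero_left {g : MvPowerSeries τ R} (hg : constantCoeff g = 0) :
    subst ![0, g] F.F = g := by
  simpa [sub_eq_zero] using F.dvd_subst_sub_right (map_zero _) hg

theorem constantCoeff_subst_pair {f g : MvPowerSeries τ R} (hf : constantCoeff f = 0)
    (hg : constantCoeff g = 0) : constantCoeff (subst ![f, g] F.F) = 0 :=
  constantCoeff_subst_eq_zero (hasSubst_pair hf hg) (Fin.forall_fin_two.mpr ⟨hf, hg⟩)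
    F.constantCoeff_F

theorem subst_pair_assoc {f g h : MvPowerSeries τ R} (hf : constantCoeff f = 0)
    (hg : constantCoeff g = 0) (hh : constantCoeff h = 0) :
    subst ![subst ![f, g] F.F, h] F.F = subst ![f, subst ![g, h] F.F] F.F := by
  have hX (i : Fin 3) : constantCoeff (X i : MvPowerSeries (Fin 3) R) = 0 := constantCoeff_X i
  have hfgh : HasSubst ![f, g, h] := hasSubst_of_constantCoeff_zero fun i => by
    fin_cases i <;> assumption
  have key := F.assoc
  rw [subst2_eq_subst F.constantCoeff_F (hX 0) (hX 1),
    subst2_eq_subst F.constantCoeff_F (hX 1) (hX 2),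
    subst2_eq_subst F.constantCoeff_F (F.constantCoeff_subst_pair (hX 0) (hX 1)) (hX 2),
    subst2_eq_subst F.constantCoeff_F (hX 0) (F.constantCoeff_subst_pair (hX 1) (hX 2))] at key
  have := congrArg (subst ![f, g, h]) key
  simpa [subst_subst_pair hfgh, F.constantCoeff_subst_pair, hX, subst_X hfgh] using this

theorem constantCoeff_mSeries (n : ℕ) : constantCoeff (F.mSeries n) = 0 := by
  induction n with
  | zero => exact map_zero _
  | succ n ih =>
    rw [mSeries, subst2_eq_subst F.constantCoeff_F ih PowerSeries.constantCoeff_X]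
    exact F.constantCoeff_subst_pair ih PowerSeries.constantCoeff_X

theorem mSeries_succ (n : ℕ) : F.mSeries (n + 1) = subst ![F.mSeries n, PowerSeries.X] F.F :=
  subst2_eq_subst F.constantCoeff_F (F.constantCoeff_mSeries n) PowerSeries.constantCoeff_X

theorem mSeries_one : F.mSeries 1 = PowerSeries.X := by
  rw [mSeries_succ]
  exact F.subst_pair_zero_left PowerSeries.constantCoeff_X

theorem mSeries_add (a b : ℕ) : F.mSeries (a + b) = subst ![F.mSeries a, F.mSeries b] F.F := by
  induction b with
  | zero => exact (F.subst_pair_zero_right (F.constantCoeff_mSeries a)).symm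
  | succ b ih =>
    rw [← add_assoc, mSeries_succ, ih, mSeries_succ, F.subst_pair_assoc
      (F.constantCoeff_mSeries a) (F.constantCoeff_mSeries b) PowerSeries.constantCoeff_X]

theorem mSeries_dvd_mSeries_of_dvd {a b : ℕ} (h : a ∣ b) : F.mSeries a ∣ F.mSeries b := by
  obtain ⟨k, rfl⟩ := h
  induction k with
  | zero => exact dvd_zero _
  | succ k ih =>
    rw [Nat.mul_succ, mSeries_add, ← sub_add_cancel (subst _ F.F) (F.mSeries (a * k))]
    exact (F.dvd_subst_sub_left (F.constantCoeff_mSeries _) (F.constantCoeff_mSeries a)).add ih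

theorem mk_mSeries_eq_of_modEq {N a b : ℕ} (h : a ≡ b [MOD N]) :
    Ideal.Quotient.mk (Ideal.span {F.mSeries N}) (F.mSeries a) =
      Ideal.Quotient.mk (Ideal.span {F.mSeries N}) (F.mSeries b) := by
  wlog hab : a ≤ b generalizing a b
  · exact (this h.symm (le_of_not_ge hab)).symm
  obtain ⟨k, hk⟩ := (Nat.modEq_iff_dvd' hab).mp h
  rw [Ideal.Quotient.eq, Ideal.mem_span_singleton, dvd_sub_comm,
    show b = a + N * k by omega, mSeries_add]
  exact (F.mSeries_dvd_mSeries_of_dvd (dvd_mul_right N k)).trans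
    (F.dvd_subst_sub_left (F.constantCoeff_mSeries a) (F.constantCoeff_mSeries _))

end FormalGroupLaw

theorem mSeries_dvd_X_mod_NSeries_general (F : FormalGroupLaw R) (N s m : ℕ)
    (h : s * m ≡ 1 [MOD N]) :
    (Ideal.Quotient.mk (Ideal.span {F.mSeries N}) (F.mSeries m) ∣
        Ideal.Quotient.mk (Ideal.span {F.mSeries N}) PowerSeries.X) ∧
      ∀ (L : Type) (_ : CommRing L)
        (φ : (PowerSeries R ⧸ Ideal.span {F.mSeries N}) →+* L),
        IsUnit (φ (Ideal.Quotient.mk (Ideal.span {F.mSeries N}) PowerSeries.X)) →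
          IsUnit (φ (Ideal.Quotient.mk (Ideal.span {F.mSeries N}) (F.mSeries m))) := by
  have hdvd : Ideal.Quotient.mk (Ideal.span {F.mSeries N}) (F.mSeries m) ∣
      Ideal.Quotient.mk (Ideal.span {F.mSeries N}) PowerSeries.X := by
    rw [← F.mSeries_one, ← F.mk_mSeries_eq_of_modEq h]
    exact map_dvd _ (F.mSeries_dvd_mSeries_of_dvd (dvd_mul_left m s))
  exact ⟨hdvd, fun L _ φ hX => isUnit_of_dvd_unit (map_dvd φ hdvd) hX⟩

/-- If `s·m ≡ 1 mod N` (with `s, m ≥ 1`), then in `E = R[[y]]/([N](y))` the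
element `[m](y)` divides `y`; consequently any localization of `E` (any ring map out of `E`)
inverting `y` also inverts `[m](y)`. -/
theorem mSeries_dvd_X_mod_NSeries (F : FormalGroupLaw R) (N s m : ℕ)
    (hs : 1 ≤ s) (hm : 1 ≤ m) (h : s * m ≡ 1 [MOD N]) :
    (Ideal.Quotient.mk (Ideal.span {F.mSeries N}) (F.mSeries m) ∣
        Ideal.Quotient.mk (Ideal.span {F.mSeries N}) PowerSeries.X) ∧
      ∀ (L : Type) (_ : CommRing L)
        (φ : (PowerSeries R ⧸ Ideal.span {F.mSeries N}) →+* L),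
        IsUnit (φ (Ideal.Quotient.mk (Ideal.span {F.mSeries N}) PowerSeries.X)) →
          IsUnit (φ (Ideal.Quotient.mk (Ideal.span {F.mSeries N}) (F.mSeries m))) :=
  mSeries_dvd_X_mod_NSeries_general F N s m h

end
end

section
/- Let k be a field, R = k[[y]] the power series ring, and f ∈ R a power series of the form f = c_d y^d + c_{d+1} y^{d+1} + ⋯ with c_d a unit of k. Then R/(f) is a free k-module of rank d with basis 1, y, …, y^{d−1}. -/
/-- Weierstrass over a field: if `f ∈ k[[y]]` has `f = c_d y^d + higher terms`
with `c_d ≠ 0` (a unit of the field `k`), then `k[[y]]/(f)` is a free `k`-module of rank `d`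
with basis `1, y, …, y^{d−1}`. -/
theorem powerSeries_quotient_basis_of_field (k : Type) [Field k]
    (f : PowerSeries k) (d : ℕ)
    (hlow : ∀ i < d, PowerSeries.coeff i f = 0)
    (hd : IsUnit (PowerSeries.coeff d f)) :
    ∃ b : Module.Basis (Fin d) k (PowerSeries k ⧸ Ideal.span {f}),
      ∀ i : Fin d, b i = Ideal.Quotient.mk (Ideal.span {f}) (PowerSeries.X ^ (i : ℕ)) := by
  classical
  -- f = X^d * g with g a unit
  obtain ⟨g, hg⟩ : (PowerSeries.X : PowerSeries k) ^ d ∣ f :=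
    PowerSeries.X_pow_dvd_iff.mpr hlow
  have hgu : IsUnit g := by
    rw [PowerSeries.isUnit_iff_constantCoeff]
    have : PowerSeries.coeff d f = PowerSeries.constantCoeff g := by
      have h0 := PowerSeries.coeff_X_pow_mul g d 0
      simp only [zero_add] at h0
      rw [hg, h0]
      simp
    rwa [this] at hd
  have hspan : Ideal.span {f} = Ideal.span {(PowerSeries.X : PowerSeries k) ^ d} := by
    rw [Ideal.span_singleton_eq_span_singleton]
    exact (Associated.symm ⟨hgu.unit, by rw [hg]; simp [IsUnit.unit_spec]⟩)
  -- the coefficient map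
  let φ : PowerSeries k →ₗ[k] (Fin d → k) :=
    LinearMap.pi fun i : Fin d => PowerSeries.coeff (i : ℕ)
  have hker : LinearMap.ker φ = (Ideal.span {f}).restrictScalars k := by
    ext x
    simp only [LinearMap.mem_ker, Submodule.restrictScalars_mem, hspan,
      Ideal.mem_span_singleton]
    constructor
    · intro h
      refine PowerSeries.X_pow_dvd_iff.mpr fun m hm => ?_
      have := congrFun h ⟨m, hm⟩
      simpa [φ] using this
    · intro h
      funext i
      have := PowerSeries.X_pow_dvd_iff.mp h i i.2
      simpa [φ] using this
  have hsurj : Function.Surjective φ := by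
    intro v
    refine ⟨∑ i : Fin d, PowerSeries.monomial (i : ℕ) (v i), ?_⟩
    funext j
    simp only [φ, LinearMap.pi_apply, map_sum, PowerSeries.coeff_monomial]
    rw [Finset.sum_eq_single j]
    · simp
    · intro b _ hb
      simp [Fin.val_eq_val, hb, Ne.symm (fun h => hb (by exact h))]
    · simp
  let ψ : (PowerSeries k ⧸ (Ideal.span {f}).restrictScalars k) →ₗ[k] (Fin d → k) :=
    Submodule.liftQ _ φ (le_of_eq hker.symm)
  have hψinj : Function.Injective ψ := by
    rw [← LinearMap.ker_eq_bot]
    exact Submodule.ker_liftQ_eq_bot _ _ _ (le_of_eq hker)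
  have hψsurj : Function.Surjective ψ := fun v => by
    obtain ⟨x, hx⟩ := hsurj v
    exact ⟨Submodule.Quotient.mk x, hx⟩
  let e : (PowerSeries k ⧸ Ideal.span {f}) ≃ₗ[k] (Fin d → k) :=
    (Submodule.Quotient.restrictScalarsEquiv k (Ideal.span {f})).symm.trans
      (LinearEquiv.ofBijective ψ ⟨hψinj, hψsurj⟩)
  refine ⟨(Pi.basisFun k (Fin d)).map e.symm, fun i => ?_⟩
  simp only [Module.Basis.map_apply, Pi.basisFun_apply]
  rw [LinearEquiv.symm_apply_eq]
  have : e (Ideal.Quotient.mk (Ideal.span {f}) (PowerSeries.X ^ (i : ℕ))) =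
      φ (PowerSeries.X ^ (i : ℕ)) := by
    simp only [e, LinearEquiv.trans_apply]
    rw [show (Ideal.Quotient.mk (Ideal.span {f}) (PowerSeries.X ^ (i : ℕ)) : PowerSeries k ⧸ Ideal.span {f})
      = Submodule.Quotient.mk (PowerSeries.X ^ (i : ℕ)) from rfl,
      Submodule.Quotient.restrictScalarsEquiv_symm_mk]
    rfl
  rw [this]
  funext j
  simp [φ, PowerSeries.coeff_X_pow, Pi.single_apply, Fin.val_eq_val, eq_comm]
end

section
/- Let R be a complete local ring with maximal ideal m, and let f ∈ R[[y]] be a power series whose reduction mod m has lowest nonzero term in degree d (a distinguished/Weierstrass situation). Then R[[y]]/(f) is a free R-module of rank d with basis 1, y, …, y^{d−1}. -/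
/-!
Weierstrass division by `g` sends every class of `A⟦X⟧ ⧸ (g)` to its unique remainder, a
polynomial of degree `< n` where `n` is the order of `g` mod `I`. This identifies the quotient
with `A[X]_n`, and the monomial basis of `A[X]_n` pulls back to `1, X, …, X ^ (n - 1)`.
-/

open Polynomial

namespace PowerSeries

variable {A : Type*} [CommRing A] {I : Ideal A} {g : A⟦X⟧}

theorem order_map_eq_of_coeff_mem {d : ℕ} (hlow : ∀ i < d, coeff i g ∈ I) (hd : coeff d g ∉ I) :
    (g.map (Ideal.Quotient.mk I)).order = d := by
  simp only [order_eq_nat, coeff_map, Ne, Ideal.Quotient.eq_zero_iff_mem]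
  exact ⟨hd, hlow⟩

namespace IsWeierstrassDivisorAt

variable (H : g.IsWeierstrassDivisorAt I) [IsAdicComplete I A]

noncomputable def quotientEquivDegreeLT :
    (A⟦X⟧ ⧸ Ideal.span {g}) ≃ₗ[A] A[X]_((g.map (Ideal.Quotient.mk I)).order.toNat) where
  __ := H.mod'.codRestrict _ fun f ↦ by
    obtain ⟨f, rfl⟩ := Ideal.Quotient.mk_surjective f
    exact mem_degreeLT.2 (H.isWeierstrassDivisionAt_div_mod f).degree_lt
  invFun p := Ideal.Quotient.mk _ (p : A[X])
  left_inv _ := H.mk_mod'_eq_self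
  right_inv p := Subtype.ext (H.mod_coe_eq_self (mem_degreeLT.1 p.2))

noncomputable def quotientBasis :
    Module.Basis (Fin (g.map (Ideal.Quotient.mk I)).order.toNat) A (A⟦X⟧ ⧸ Ideal.span {g}) :=
  (degreeLT.basis A _).map H.quotientEquivDegreeLT.symm

@[simp]
theorem quotientBasis_apply (i : Fin (g.map (Ideal.Quotient.mk I)).order.toNat) :
    H.quotientBasis i = Ideal.Quotient.mk _ (X ^ (i : ℕ)) := by
  change Ideal.Quotient.mk _ ((degreeLT.basis A _ i : A[X]) : A⟦X⟧) = _
  rw [degreeLT.basis_val, Polynomial.coe_pow, Polynomial.coe_X, map_pow]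

end IsWeierstrassDivisorAt

end PowerSeries

/-- Weierstrass division/preparation: if `R` is a complete local ring with
maximal ideal `m` and `f ∈ R[[y]]` reduces mod `m` to a series with lowest nonzero term in
degree `d` (i.e. the first `d` coefficients lie in `m` and the `d`-th coefficient is a
unit), then `R[[y]]/(f)` is a free `R`-module of rank `d` with basis `1, y, …, y^{d−1}`. -/
theorem powerSeries_quotient_basis_of_complete_local (R : Type) [CommRing R]
    [IsLocalRing R] [IsAdicComplete (IsLocalRing.maximalIdeal R) R]
    (f : PowerSeries R) (d : ℕ)
    (hlow : ∀ i < d, PowerSeries.coeff i f ∈ IsLocalRing.maximalIdeal R)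
    (hd : IsUnit (PowerSeries.coeff d f)) :
    ∃ b : Module.Basis (Fin d) R (PowerSeries R ⧸ Ideal.span {f}),
      ∀ i : Fin d, b i = Ideal.Quotient.mk (Ideal.span {f}) (PowerSeries.X ^ (i : ℕ)) := by
  obtain rfl : (f.map (Ideal.Quotient.mk _)).order.toNat = d := by
    rw [PowerSeries.order_map_eq_of_coeff_mem hlow (IsLocalRing.notMem_maximalIdeal.2 hd),
      ENat.toNat_natCast]
  have H : f.IsWeierstrassDivisorAt (IsLocalRing.maximalIdeal R) := hd
  exact ⟨H.quotientBasis, H.quotientBasis_apply⟩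
end
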